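/- arXiv:1601.00711 — 7 statements merged into one kernel-verified Lean document; each statement's English description precedes it below -/
import Mathlib

section
/- If q is a detailed balanced equilibrium with all positive entries for an infinitesimal stochastic matrix H, then H satisfies Kolmogorov's criterion: for any finite cyclic sequence of states i_1, i_2, ..., i_n, the product H_{i_1 i_2} H_{i_2 i_3} ⋯ H_{i_n i_1} equals the product H_{i_1 i_n} H_{i_n i_{n−1}} ⋯ H_{i_2 i_1}. -/
/-- A detailed balanced equilibrium with positive entries implies Kolmogorov's
criterion: the product of rates around any cycle equals the product of rates
around the reversed cycle. -/
theorem detailed_balance_implies_kolmogorov {V : Type*} [Fintype V] (H : V → V → ℝ)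
    (hoff : ∀ i j, i ≠ j → 0 ≤ H i j)
    (hsum : ∀ j, ∑ i, H i j = 0)
    (q : V → ℝ) (hq : ∀ i, 0 < q i)
    (hdb : ∀ i j, H i j * q j = H j i * q i) :
    ∀ (n : ℕ) (c : ℕ → V), c n = c 0 →
      ∏ k ∈ Finset.range n, H (c k) (c (k + 1)) =
      ∏ k ∈ Finset.range n, H (c (k + 1)) (c k) := by
  intro n c hc
  have key : (∏ k ∈ Finset.range n, H (c k) (c (k + 1))) *
      ∏ k ∈ Finset.range n, q (c (k + 1)) =
      (∏ k ∈ Finset.range n, H (c (k + 1)) (c k)) *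
      ∏ k ∈ Finset.range n, q (c k) := by
    rw [← Finset.prod_mul_distrib, ← Finset.prod_mul_distrib]
    exact Finset.prod_congr rfl fun k _ => hdb (c k) (c (k + 1))
  have hshift : (∏ k ∈ Finset.range n, q (c (k + 1))) =
      ∏ k ∈ Finset.range n, q (c k) := by
    have h1 := Finset.prod_range_succ' (fun k => q (c k)) n
    have h2 := Finset.prod_range_succ (fun k => q (c k)) n
    rw [h2, hc] at h1
    exact mul_right_cancel₀ (hq (c 0)).ne' h1.symm
  rw [hshift] at key
  exact mul_right_cancel₀ (Finset.prod_pos fun k _ => hq (c k)).ne' key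
end

section
/- If an infinitesimal stochastic matrix H is irreducible (in the sense that its associated graph with edges where H_{ij} > 0 is strongly connected) and satisfies Kolmogorov's criterion, then H admits a detailed balanced equilibrium q with all q_i > 0. -/
/-! The rate of the transition `a → b` is `H b a`. Fix a base state `v`. Gluing a path from `v` to
`i` to the reverse of another such path gives a cycle, so Kolmogorov's criterion says exactly that
the ratio of the product of the rates along a path from `v` to `i` to the product of the rates
along the reversed path does not depend on the path; this ratio is `q i`, and appending the edge
between `j` and `i` to a path ending at `j` gives detailed balance. Irreducibility supplies the
paths, and the criterion applied to an edge closed up by a path back shows that `H a b > 0` forces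
`H b a > 0`, which makes all the ratios positive. -/

namespace List

variable {V M : Type*}

def pathProd [CommMonoid M] (G : V → V → M) : List V → M
  | a :: b :: l => G a b * pathProd G (b :: l)
  | _ => 1

section CommMonoid

variable [CommMonoid M] (G : V → V → M)

@[simp] lemma pathProd_nil : pathProd G [] = 1 := rfl

@[simp] lemma pathProd_singleton (a : V) : pathProd G [a] = 1 := rfl

@[simp] lemma pathProd_cons_cons (a b : V) (l : List V) :
    pathProd G (a :: b :: l) = G a b * pathProd G (b :: l) := rfl

lemma pathProd_append_tail : ∀ {p q : List V}, p.getLast? = q.head? →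
    pathProd G (p ++ q.tail) = pathProd G p * pathProd G q
  | [], [], _ => by simp
  | [a], b :: q, h => by
      obtain rfl : a = b := by simpa using h
      simp
  | a :: b :: p, q, h => by
      have ih := pathProd_append_tail (p := b :: p) (q := q) (by simpa using h)
      simp only [cons_append, pathProd_cons_cons] at ih ⊢
      rw [ih, mul_assoc]

lemma getLast?_append_tail {p q : List V} (h : p.getLast? = q.head?) :
    (p ++ q.tail).getLast? = q.getLast? := by
  rcases q with _ | ⟨b, _ | ⟨c, q⟩⟩
  · simpa using h
  · simpa using h
  · simp [getLast?_eq_some_getLast (cons_ne_nil c q)]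

lemma pathProd_append_singleton {p : List V} {a : V} (h : p.getLast? = some a) (b : V) :
    pathProd G (p ++ [b]) = pathProd G p * G a b := by
  simpa using pathProd_append_tail G (q := [a, b]) h

lemma pathProd_reverse : ∀ l : List V, pathProd G l.reverse = pathProd (flip G) l
  | [] => rfl
  | [_] => rfl
  | a :: b :: l => by
      rw [reverse_cons, pathProd_append_singleton G (a := b) (by simp), pathProd_reverse (b :: l),
        pathProd_cons_cons, mul_comm]
      rfl

lemma pathProd_cons_eq_prod_range (d a : V) : ∀ l : List V,
    pathProd G (a :: l) =
      ∏ k ∈ Finset.range l.length, G ((a :: l).getD k d) ((a :: l).getD (k + 1) d)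
  | [] => rfl
  | b :: l => by
      rw [pathProd_cons_cons, pathProd_cons_eq_prod_range d b l, length_cons,
        Finset.prod_range_succ']
      simp [mul_comm]

end CommMonoid

lemma pathProd_pos [CommSemiring M] [PartialOrder M] [IsStrictOrderedRing M] {G : V → V → M} :
    ∀ {l : List V}, l.IsChain (fun a b => 0 < G a b) → 0 < pathProd G l
  | [], _ | [_], _ => zero_lt_one
  | _ :: _ :: _, h => by
      rw [isChain_cons_cons] at h
      exact mul_pos h.1 (pathProd_pos h.2)

lemma exists_isChain_of_reflTransGen {R : V → V → Prop} {a b : V}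
    (h : Relation.ReflTransGen R a b) :
    ∃ p : List V, p.IsChain R ∧ p.head? = some a ∧ p.getLast? = some b := by
  obtain ⟨l, hchain, hlast⟩ := exists_isChain_cons_of_relationReflTransGen h
  exact ⟨a :: l, hchain, rfl, by rw [getLast?_eq_some_getLast (cons_ne_nil a l), hlast]⟩

end List

open List

section Kolmogorov

variable {V : Type*}

/-- A cycle `i₁, …, iₙ, i₁` is encoded as the closed list `[i₁, …, iₙ, i₁]`. -/
def KolmogorovCriterion {M : Type*} [CommMonoid M] (G : V → V → M) : Prop :=
  ∀ c : List V, c.head? = c.getLast? → c.pathProd G = c.pathProd (flip G)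

lemma kolmogorovCriterion_of_prod_range {M : Type*} [CommMonoid M] {G : V → V → M}
    (h : ∀ (n : ℕ) (c : ℕ → V), c n = c 0 →
      ∏ k ∈ Finset.range n, G (c k) (c (k + 1)) =
        ∏ k ∈ Finset.range n, G (c (k + 1)) (c k)) :
    KolmogorovCriterion G := by
  rintro (_ | ⟨a, l⟩) hc
  · rfl
  have hclosed : (a :: l).getD l.length a = (a :: l).getD 0 a := by
    rw [getLast?_eq_some_getLast (cons_ne_nil a l), getLast_eq_getElem] at hc
    simpa [getD_eq_getElem?_getD] using hc.symm
  rw [pathProd_cons_eq_prod_range _ a, pathProd_cons_eq_prod_range _ a]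
  exact h _ (fun k => (a :: l).getD k a) hclosed

namespace KolmogorovCriterion

section CommMonoid

variable {M : Type*} [CommMonoid M] {G : V → V → M}

theorem pathProd_mul_pathProd_flip (hG : KolmogorovCriterion G) {p q : List V}
    (hhead : p.head? = q.head?) (hlast : p.getLast? = q.getLast?) :
    p.pathProd G * q.pathProd (flip G) = p.pathProd (flip G) * q.pathProd G := by
  rcases p with _ | ⟨a, p⟩
  · obtain rfl : q = [] := by simpa [eq_comm] using hhead
    simp
  have hglue : (a :: p).getLast? = q.reverse.head? := by rw [head?_reverse, hlast]
  have hcycle := hG _ <| by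
    rw [getLast?_append_tail hglue, getLast?_reverse, ← hhead]
    simp
  rwa [pathProd_append_tail _ hglue, pathProd_append_tail _ hglue, pathProd_reverse,
    pathProd_reverse, flip_flip] at hcycle

end CommMonoid

theorem detailed_balance {K : Type*} [Field K] {G : V → V → K} (hG : KolmogorovCriterion G)
    {v : V} {L : V → List V} (hhead : ∀ i, (L i).head? = some v)
    (hlast : ∀ i, (L i).getLast? = some i) (hL : ∀ i, (L i).pathProd G ≠ 0) (i j : V) :
    G i j * ((L j).pathProd (flip G) / (L j).pathProd G) =
      G j i * ((L i).pathProd (flip G) / (L i).pathProd G) := by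
  have hpath := hG.pathProd_mul_pathProd_flip (p := L j ++ [i]) (q := L i)
    (by rw [head?_append, hhead, hhead]; rfl) (by rw [getLast?_concat, hlast])
  rw [pathProd_append_singleton _ (hlast j), pathProd_append_singleton _ (hlast j)] at hpath
  simp only [flip] at hpath
  field_simp [hL i, hL j]
  linear_combination -hpath

section Ordered

variable {K : Type*} [CommSemiring K] [PartialOrder K] [IsStrictOrderedRing K] {G : V → V → K}

theorem pos_symm (hG : KolmogorovCriterion G) (hoff : ∀ i j, i ≠ j → 0 ≤ G i j)
    (hirr : ∀ i j : V, Relation.ReflTransGen (fun a b => 0 < G b a) i j)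
    {a b : V} (hab : 0 < G a b) : 0 < G b a := by
  rcases eq_or_ne a b with rfl | hne
  · exact hab
  obtain ⟨p, hchain, hhead, hlast⟩ := exists_isChain_of_reflTransGen (hirr a b)
  have hpath := hG.pathProd_mul_pathProd_flip (q := [a, b]) hhead hlast
  simp only [pathProd_cons_cons, pathProd_singleton, mul_one, flip] at hpath
  refine (hoff b a hne.symm).lt_of_ne fun hba => ?_
  have : 0 < p.pathProd (flip G) * G a b := mul_pos (pathProd_pos hchain) hab
  rw [← hpath, ← hba, mul_zero] at this
  exact this.false

theorem pathProd_pos_of_isChain (hG : KolmogorovCriterion G)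
    (hoff : ∀ i j, i ≠ j → 0 ≤ G i j)
    (hirr : ∀ i j : V, Relation.ReflTransGen (fun a b => 0 < G b a) i j)
    {p : List V} (hp : p.IsChain (fun a b => 0 < G b a)) : 0 < p.pathProd G :=
  pathProd_pos (hp.imp fun _ _ => hG.pos_symm hoff hirr)

end Ordered

end KolmogorovCriterion

end Kolmogorov

theorem kolmogorov_implies_detailed_balanced_equilibrium_general {V : Type*}
    (H : V → V → ℝ)
    (hoff : ∀ i j, i ≠ j → 0 ≤ H i j)
    (hirr : ∀ i j : V, Relation.ReflTransGen (fun a b => 0 < H b a) i j)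
    (hkol : ∀ (n : ℕ) (c : ℕ → V), c n = c 0 →
      ∏ k ∈ Finset.range n, H (c k) (c (k + 1)) =
      ∏ k ∈ Finset.range n, H (c (k + 1)) (c k)) :
    ∃ q : V → ℝ, (∀ i, 0 < q i) ∧ ∀ i j, H i j * q j = H j i * q i := by
  have hK : KolmogorovCriterion H := kolmogorovCriterion_of_prod_range hkol
  rcases isEmpty_or_nonempty V with _ | ⟨⟨v⟩⟩
  · exact ⟨fun _ => 1, isEmptyElim, isEmptyElim⟩
  choose L hchain hhead hlast using fun i => exists_isChain_of_reflTransGen (hirr v i)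
  have hpos i : 0 < (L i).pathProd H := hK.pathProd_pos_of_isChain hoff hirr (hchain i)
  exact ⟨fun i => (L i).pathProd (flip H) / (L i).pathProd H,
    fun i => div_pos (pathProd_pos (hchain i)) (hpos i),
    hK.detailed_balance hhead hlast fun i => (hpos i).ne'⟩

/-- An irreducible infinitesimal stochastic matrix satisfying Kolmogorov's
criterion admits a detailed balanced equilibrium with all positive populations. -/
theorem kolmogorov_implies_detailed_balanced_equilibrium {V : Type*} [Fintype V]
    (H : V → V → ℝ)
    (hoff : ∀ i j, i ≠ j → 0 ≤ H i j)
    (hsum : ∀ j, ∑ i, H i j = 0)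
    (hirr : ∀ i j : V, Relation.ReflTransGen (fun a b => 0 < H b a) i j)
    (hkol : ∀ (n : ℕ) (c : ℕ → V), c n = c 0 →
      ∏ k ∈ Finset.range n, H (c k) (c (k + 1)) =
      ∏ k ∈ Finset.range n, H (c (k + 1)) (c k)) :
    ∃ q : V → ℝ, (∀ i, 0 < q i) ∧ ∀ i j, H i j * q j = H j i * q i :=
  kolmogorov_implies_detailed_balanced_equilibrium_general H hoff hirr hkol
end

section
/- For an open detailed balanced Markov process with boundary B ⊆ V and fixed boundary populations b : B → ℝ, a population distribution p with p|_B = b is a steady state (i.e., ∑_j H_{ij} p_j = 0 for all internal states i ∈ V∖B) if and only if p is a critical point of the dissipation D restricted to distributions agreeing with b on B. -/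
/-!
Writing `u = p / q` and `w i j = H i j * q j`, detailed balance makes `w` symmetric, so the
dissipation is the Dirichlet form `½ ∑ w i j (u j - u i)²`. Its partial derivative in `p n` is
`(2 / q n) ∑ j, w n j (u n - u j)`, and since `∑ j, H n j q j = 0` (columns of `H` sum to zero
and `w` is symmetric) this equals `-(2 / q n) ∑ j, H n j p j`. As `q n ≠ 0`, the partial
derivative vanishes exactly when the master equation holds at `n`.
-/

open Finset Function

section DirichletForm

variable {V : Type*} [Fintype V]

theorem sum_sum_mul_sub_mul_sub_of_symm {w : V → V → ℝ} (hw : ∀ i j, w i j = w j i)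
    (u v : V → ℝ) :
    ∑ i, ∑ j, w i j * (u j - u i) * (v j - v i) = 2 * ∑ i, v i * ∑ j, w i j * (u i - u j) := by
  have hswap : ∑ i, ∑ j, w i j * (u j - u i) * v j = ∑ i, ∑ j, w i j * (u i - u j) * v i := by
    rw [Finset.sum_comm]
    simp_rw [hw]
  calc ∑ i, ∑ j, w i j * (u j - u i) * (v j - v i)
      = ∑ i, ∑ j, w i j * (u j - u i) * v j + ∑ i, ∑ j, w i j * (u i - u j) * v i := by
        rw [← Finset.sum_add_distrib]
        refine Finset.sum_congr rfl fun i _ => ?_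
        rw [← Finset.sum_add_distrib]
        exact Finset.sum_congr rfl fun j _ => by ring
    _ = 2 * ∑ i, v i * ∑ j, w i j * (u i - u j) := by
        rw [hswap, ← two_mul]
        simp_rw [Finset.mul_sum]
        exact Finset.sum_congr rfl fun i _ => Finset.sum_congr rfl fun j _ => by ring

end DirichletForm

section Dissipation

variable {V : Type*} [Fintype V] {H : V → V → ℝ} {q : V → ℝ}

noncomputable def dissipation (H : V → V → ℝ) (q r : V → ℝ) : ℝ :=
  (1 / 2) * ∑ i, ∑ j, H i j * q j * (r j / q j - r i / q i) ^ 2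

theorem sum_mul_eq_zero_of_detailedBalance (hsum : ∀ j, ∑ i, H i j = 0)
    (hdb : ∀ i j, H i j * q j = H j i * q i) (n : V) :
    ∑ j, H n j * q j = 0 := by
  simp_rw [hdb n, ← Finset.sum_mul, hsum, zero_mul]

theorem hasDerivAt_dissipation_update [DecidableEq V] (hsum : ∀ j, ∑ i, H i j = 0)
    (hq : ∀ i, q i ≠ 0) (hdb : ∀ i j, H i j * q j = H j i * q i) (p : V → ℝ) (n : V) :
    HasDerivAt (fun t => dissipation H q (update p n t)) (-(2 / q n) * ∑ j, H n j * p j)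
      (p n) := by
  set u : V → ℝ := fun j => p j / q j
  set v : V → ℝ := fun j => (Pi.single n 1 : V → ℝ) j / q j
  have hcoord : ∀ j, HasDerivAt (fun t => update p n t j / q j) (v j) (p n) := fun j =>
    (hasDerivAt_pi.mp (hasDerivAt_update p n (p n)) j).div_const (q j)
  have hterm : ∀ i j, HasDerivAt
      (fun t => H i j * q j * (update p n t j / q j - update p n t i / q i) ^ 2)
      (H i j * q j * (2 * (u j - u i) * (v j - v i))) (p n) := fun i j => by
    simpa [u] using (((hcoord j).sub (hcoord i)).pow 2).const_mul (H i j * q j)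
  have hD := (HasDerivAt.fun_sum (u := univ) fun i _ =>
    HasDerivAt.fun_sum (u := univ) fun j _ => hterm i j).const_mul (1 / 2 : ℝ)
  refine hD.congr_deriv (Eq.symm ?_)
  calc -(2 / q n) * ∑ j, H n j * p j
      = 2 * (1 / q n) * ∑ j, H n j * q j * (u n - u j) := by
        simp_rw [mul_sub, Finset.sum_sub_distrib, ← Finset.sum_mul,
          sum_mul_eq_zero_of_detailedBalance hsum hdb, zero_mul, zero_sub, u]
        simp_rw [mul_assoc, mul_div_cancel₀ _ (hq _)]
        ring
    _ = 2 * ∑ i, v i * ∑ j, H i j * q j * (u i - u j) := by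
        conv_rhs => rw [Fintype.sum_eq_single n fun i hi => by simp [v, hi]]
        simp [v, mul_assoc]
    _ = 1 / 2 * ∑ i, ∑ j, H i j * q j * (2 * (u j - u i) * (v j - v i)) := by
        rw [← sum_sum_mul_sub_mul_sub_of_symm hdb]
        simp_rw [Finset.mul_sum]
        exact Finset.sum_congr rfl fun i _ => Finset.sum_congr rfl fun j _ => by ring

end Dissipation

theorem steady_state_iff_critical_point_general {V : Type*} [Fintype V] [DecidableEq V]
    (H : V → V → ℝ)
    (hsum : ∀ j, ∑ i, H i j = 0)
    (q : V → ℝ) (hq : ∀ i, 0 < q i)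
    (hdb : ∀ i j, H i j * q j = H j i * q i)
    (B : Finset V) (p : V → ℝ) :
    let D : (V → ℝ) → ℝ := fun r =>
      (1 / 2) * ∑ i, ∑ j, H i j * q j * (r j / q j - r i / q i) ^ 2
    (∀ i ∉ B, ∑ j, H i j * p j = 0) ↔
      (∀ n ∉ B, deriv (fun t => D (Function.update p n t)) (p n) = 0) := by
  intro D
  have hderiv : ∀ n, deriv (fun t => D (update p n t)) (p n) = -(2 / q n) * ∑ j, H n j * p j :=
    fun n => (hasDerivAt_dissipation_update hsum (fun i => (hq i).ne') hdb p n).deriv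
  have hcoeff : ∀ n, -(2 / q n) ≠ 0 := fun n =>
    neg_ne_zero.mpr (div_ne_zero two_ne_zero (hq n).ne')
  simp_rw [hderiv, mul_eq_zero, hcoeff, false_or]

/-- For an open detailed balanced Markov process with boundary `B` and fixed
boundary populations `b`, a distribution agreeing with `b` on `B` is a steady
state iff it is a critical point of the dissipation restricted to
distributions agreeing with `b` on `B`. -/
theorem steady_state_iff_critical_point {V : Type*} [Fintype V] [DecidableEq V]
    (H : V → V → ℝ)
    (hoff : ∀ i j, i ≠ j → 0 ≤ H i j)
    (hsum : ∀ j, ∑ i, H i j = 0)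
    (q : V → ℝ) (hq : ∀ i, 0 < q i)
    (hdb : ∀ i j, H i j * q j = H j i * q i)
    (B : Finset V) (b : V → ℝ) (p : V → ℝ)
    (hpb : ∀ i ∈ B, p i = b i) :
    let D : (V → ℝ) → ℝ := fun r =>
      (1 / 2) * ∑ i, ∑ j, H i j * q j * (r j / q j - r i / q i) ^ 2
    (∀ i ∉ B, ∑ j, H i j * p j = 0) ↔
      (∀ n ∉ B, deriv (fun t => D (Function.update p n t)) (p n) = 0) :=
  steady_state_iff_critical_point_general H hsum q hq hdb B p
end

section
/- The dissipation functional D(p) = (1/2)∑_{i,j} H_{ij} q_j (p_j/q_j − p_i/q_i)² is a convex function of p; consequently, a distribution p with p|_B = b is a steady state with boundary values b if and only if p minimizes D over all distributions agreeing with b on the boundary. -/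
open Finset

lemma quad_nonneg_zero' {G C : ℝ} (hC : 0 ≤ C) (h : ∀ t : ℝ, 0 ≤ t * G + t^2 * C) : G = 0 := by
  have h2 : (0:ℝ) < C + 1 := by linarith
  have h1 := h (-G / (C + 1))
  have h3 : (-G/(C+1)) * G + (-G/(C+1))^2 * C = -G^2/(C+1)^2 := by
    field_simp; ring
  rw [h3] at h1
  have h4 : (0:ℝ) < (C+1)^2 := by positivity
  have h5 : (-G^2/(C+1)^2) * (C+1)^2 = -G^2 := div_mul_cancel₀ _ (by positivity)
  nlinarith [mul_nonneg h1 h4.le, sq_nonneg G]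

lemma aux_G' {V : Type*} [Fintype V] (H : V → V → ℝ)
    (hsum : ∀ j, ∑ i, H i j = 0)
    (q : V → ℝ) (hq : ∀ i, 0 < q i)
    (hdb : ∀ i j, H i j * q j = H j i * q i) (p w : V → ℝ) :
    ∑ i, ∑ j, H i j * q j * (p j / q j - p i / q i) * (w j / q j - w i / q i)
      = -2 * ∑ i, (w i / q i) * ∑ j, H i j * p j := by
  have hq' : ∀ k, q k ≠ 0 := fun k => (hq k).ne'
  have hrow : ∀ i, ∑ j, H i j * q j = 0 := by
    intro i
    have h1 : ∑ j, H i j * q j = ∑ j, H j i * q i := by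
      refine Finset.sum_congr rfl fun j _ => hdb i j
    rw [h1, ← Finset.sum_mul, hsum i, zero_mul]
  have step : ∀ i j, H i j * q j * (p j / q j - p i / q i) * (w j / q j - w i / q i)
      = H i j * (q j * (p j / q j) * (w j / q j)) - H i j * q j * (p j / q j) * (w i / q i)
        - H i j * q j * (p i / q i) * (w j / q j) + (H i j * q j) * ((p i / q i) * (w i / q i)) := by
    intro i j
    ring
  simp only [step, Finset.sum_add_distrib, Finset.sum_sub_distrib]
  have hA : ∑ i, ∑ j, H i j * (q j * (p j / q j) * (w j / q j)) = 0 := by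
    rw [Finset.sum_comm]
    refine Finset.sum_eq_zero fun j _ => ?_
    rw [← Finset.sum_mul, hsum j, zero_mul]
  have hE : ∑ i, ∑ j, (H i j * q j) * ((p i / q i) * (w i / q i)) = 0 := by
    refine Finset.sum_eq_zero fun i _ => ?_
    rw [← Finset.sum_mul, hrow i, zero_mul]
  have hB : ∑ i, ∑ j, H i j * q j * (p j / q j) * (w i / q i)
      = ∑ i, (w i / q i) * ∑ j, H i j * p j := by
    refine Finset.sum_congr rfl fun i _ => ?_
    rw [Finset.mul_sum]
    refine Finset.sum_congr rfl fun j _ => ?_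
    have hc : H i j * q j * (p j / q j) = H i j * p j := by
      rw [mul_assoc, mul_comm (q j), div_mul_cancel₀ _ (hq' j)]
    rw [hc]
    ring
  have hC : ∑ i, ∑ j, H i j * q j * (p i / q i) * (w j / q j)
      = ∑ i, (w i / q i) * ∑ j, H i j * p j := by
    rw [Finset.sum_comm]
    refine Finset.sum_congr rfl fun j _ => ?_
    rw [Finset.mul_sum]
    refine Finset.sum_congr rfl fun i _ => ?_
    rw [hdb i j]
    have hc : H j i * q i * (p i / q i) = H j i * p i := by
      rw [mul_assoc, mul_comm (q i), div_mul_cancel₀ _ (hq' i)]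
    rw [hc]
    ring
  rw [hA, hE, hB, hC]
  ring

lemma aux_expand' {V : Type*} [Fintype V] (H : V → V → ℝ)
    (q : V → ℝ) (hq : ∀ i, 0 < q i) (p w : V → ℝ) (t : ℝ) :
    (1 / 2) * ∑ i, ∑ j, H i j * q j * ((p j + t * w j) / q j - (p i + t * w i) / q i) ^ 2
      = (1 / 2) * (∑ i, ∑ j, H i j * q j * (p j / q j - p i / q i) ^ 2)
        + t * (∑ i, ∑ j, H i j * q j * (p j / q j - p i / q i) * (w j / q j - w i / q i))
        + t ^ 2 * ((1 / 2) * ∑ i, ∑ j, H i j * q j * (w j / q j - w i / q i) ^ 2) := by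
  have hq' : ∀ k, q k ≠ 0 := fun k => (hq k).ne'
  have key : ∀ i j : V, H i j * q j * ((p j + t * w j) / q j - (p i + t * w i) / q i) ^ 2
      = H i j * q j * (p j / q j - p i / q i) ^ 2
        + 2 * (t * (H i j * q j * (p j / q j - p i / q i) * (w j / q j - w i / q i)))
        + t ^ 2 * (H i j * q j * (w j / q j - w i / q i) ^ 2) := by
    intro i j
    rw [add_div, add_div, mul_div_assoc t, mul_div_assoc t]
    ring
  simp only [key, Finset.sum_add_distrib, ← Finset.mul_sum]
  ring

lemma aux_nonneg' {V : Type*} [Fintype V] (H : V → V → ℝ)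
    (hoff : ∀ i j, i ≠ j → 0 ≤ H i j)
    (q : V → ℝ) (hq : ∀ i, 0 < q i) (w : V → ℝ) :
    0 ≤ (1 / 2) * ∑ i, ∑ j, H i j * q j * (w j / q j - w i / q i) ^ 2 := by
  apply mul_nonneg (by norm_num)
  refine Finset.sum_nonneg fun i _ => Finset.sum_nonneg fun j _ => ?_
  rcases eq_or_ne i j with rfl | hij
  · simp
  · exact mul_nonneg (mul_nonneg (hoff i j hij) (hq j).le) (sq_nonneg _)


/-- The dissipation functional is convex; consequently, a distribution agreeing
with the boundary populations `b` on `B` is a steady state iff it minimizes the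
dissipation over all distributions agreeing with `b` on `B`. -/
theorem dissipation_convex_and_minimum_principle {V : Type*} [Fintype V]
    (H : V → V → ℝ)
    (hoff : ∀ i j, i ≠ j → 0 ≤ H i j)
    (hsum : ∀ j, ∑ i, H i j = 0)
    (q : V → ℝ) (hq : ∀ i, 0 < q i)
    (hdb : ∀ i j, H i j * q j = H j i * q i)
    (B : Finset V) (b : V → ℝ) :
    let D : (V → ℝ) → ℝ := fun r =>
      (1 / 2) * ∑ i, ∑ j, H i j * q j * (r j / q j - r i / q i) ^ 2
    ConvexOn ℝ Set.univ D ∧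
    ∀ p : V → ℝ, (∀ i ∈ B, p i = b i) →
      ((∀ i ∉ B, ∑ j, H i j * p j = 0) ↔
        (∀ p' : V → ℝ, (∀ i ∈ B, p' i = b i) → D p ≤ D p')) := by
  intro D
  classical
  have hq' : ∀ k, q k ≠ 0 := fun k => (hq k).ne'
  have hD : ∀ r : V → ℝ,
      D r = (1 / 2) * ∑ i, ∑ j, H i j * q j * (r j / q j - r i / q i) ^ 2 := fun _ => rfl
  have hDnn : ∀ r : V → ℝ, 0 ≤ D r := fun r => by
    rw [hD]; exact aux_nonneg' H hoff q hq r
  have hexp : ∀ (r w : V → ℝ) (t : ℝ),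
      D (fun k => r k + t * w k)
        = D r + t * (-2 * ∑ i, (w i / q i) * ∑ j, H i j * r j) + t ^ 2 * D w := by
    intro r w t
    rw [hD, hD, hD, ← aux_G' H hsum q hq hdb r w]
    exact aux_expand' H q hq r w t
  constructor
  · refine ⟨convex_univ, fun x _ y _ a c ha hc hac => ?_⟩
    have ha' : a = 1 - c := by linarith
    subst ha'
    have e1 : (1 - c) • x + c • y = fun k => x k + c * (y k - x k) := by
      funext k
      simp only [Pi.add_apply, Pi.smul_apply, smul_eq_mul]
      ring
    have e2 : y = fun k => x k + 1 * (y k - x k) := by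
      funext k; ring
    have h1 := hexp x (fun k => y k - x k) c
    have h2' := (congrArg D e2).trans (hexp x (fun k => y k - x k) 1)
    rw [e1, smul_eq_mul, smul_eq_mul, h1]
    have hw := hDnn (fun k => y k - x k)
    nlinarith [mul_nonneg (mul_nonneg ha hc) hw]
  · intro p hp
    constructor
    · intro hsteady p' hp'
      have e : p' = fun k => p k + 1 * (p' k - p k) := by funext k; ring
      have h1 := (congrArg D e).trans (hexp p (fun k => p' k - p k) 1)
      have hG : ∑ i, ((p' i - p i) / q i) * ∑ j, H i j * p j = 0 := by
        refine Finset.sum_eq_zero fun i _ => ?_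
        by_cases hi : i ∈ B
        · rw [hp' i hi, hp i hi, sub_self, zero_div, zero_mul]
        · rw [hsteady i hi, mul_zero]
      rw [hG] at h1
      have := hDnn (fun k => p' k - p k)
      rw [h1]
      nlinarith
    · intro hmin k hk
      set w : V → ℝ := fun m => if m = k then 1 else 0 with hw
      have hwk : w k = 1 := by rw [hw]; simp
      have hkey : ∀ t : ℝ, 0 ≤ t * (-2 * ∑ i, (w i / q i) * ∑ j, H i j * p j)
          + t ^ 2 * D w := by
        intro t
        have hb' : ∀ i ∈ B, (p i + t * w i) = b i := by
          intro i hi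
          have hik : i ≠ k := fun h => hk (h ▸ hi)
          have hwi : w i = 0 := by rw [hw]; exact if_neg hik
          rw [hwi, mul_zero, add_zero, hp i hi]
        have := hmin (fun m => p m + t * w m) hb'
        rw [hexp p w t] at this
        linarith
      have hGsum : ∑ i, (w i / q i) * ∑ j, H i j * p j
          = (w k / q k) * ∑ j, H k j * p j := by
        refine Fintype.sum_eq_single k fun m hmk => ?_
        have hwm : w m = 0 := by rw [hw]; exact if_neg hmk
        rw [hwm, zero_div, zero_mul]
      have hG0 := quad_nonneg_zero' (hDnn w) hkey
      rw [hGsum, hwk] at hG0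
      have h1 : (1 / q k) * ∑ j, H k j * p j = 0 := by linarith
      rcases mul_eq_zero.mp h1 with h | h
      · exact absurd h (one_div_ne_zero (hq' k))
      · exact h
end

section
/- For a closed Markov process with equilibrium q (Hq = 0, all q_i > 0) and a positive solution p(t) of the master equation, the relative entropy I(p(t), q) = ∑_i p_i ln(p_i/q_i) is non-increasing in time: dI/dt = ∑_{i,j} H_{ij} p_j (ln(p_i/q_i) − p_i q_j/(q_i p_j)) ≤ 0. -/
/-!
Along the master equation, `d/dt ∑ pᵢ ln(pᵢ/qᵢ) = ∑ ṗᵢ (ln(pᵢ/qᵢ) + 1)`, and the `+ 1` drops out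
because the columns of `H` sum to zero; `Hq = 0` makes the correction term `pᵢqⱼ/(qᵢpⱼ)` in the
formula for `dI/dt` vanish as well. For the sign, write `xᵢ = pᵢ/qᵢ` and add the zero sum
`∑ᵢⱼ Hᵢⱼ pⱼ (1 - ln xⱼ)`: every term becomes `Hᵢⱼ pⱼ (ln(xᵢ/xⱼ) + 1 - xᵢ/xⱼ)`, which vanishes for
`i = j` and is `≤ 0` otherwise, since `Hᵢⱼ ≥ 0` there and `ln y ≤ y - 1`.
-/

open Finset Real

theorem sum_sum_mul_eq_zero_of_sum_eq_zero {V R : Type*} [Fintype V]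
    [NonUnitalNonAssocSemiring R] {H : V → V → R} (hsum : ∀ j, ∑ i, H i j = 0) (f : V → R) :
    ∑ i, ∑ j, H i j * f j = 0 := by
  rw [sum_comm]
  simp [← sum_mul, hsum]

theorem Real.log_sub_log_add_one_sub_div_nonpos {x y : ℝ} (hx : 0 < x) (hy : 0 < y) :
    log x - log y + 1 - x / y ≤ 0 := by
  have := log_le_sub_one_of_pos (div_pos hx hy)
  rw [log_div hx.ne' hy.ne'] at this
  linarith

theorem hasDerivAt_mul_log_div_const {f : ℝ → ℝ} {f' t c : ℝ} (hf : HasDerivAt f f' t)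
    (ht : f t ≠ 0) (hc : c ≠ 0) :
    HasDerivAt (fun s => f s * log (f s / c)) (f' * (log (f t / c) + 1)) t := by
  refine (hf.fun_mul ((hf.div_const c).log (div_ne_zero ht hc))).congr_deriv ?_
  field_simp

section MasterEquation

variable {V : Type*} [Fintype V] {H : V → V → ℝ}

theorem sum_sum_mul_log_sub_eq_sum_mul_log {p q : V → ℝ} (heq : ∀ i, ∑ j, H i j * q j = 0)
    (hp : ∀ j, p j ≠ 0) (hq : ∀ i, q i ≠ 0) :
    ∑ i, ∑ j, H i j * p j * (log (p i / q i) - p i * q j / (q i * p j)) =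
      ∑ i, (∑ j, H i j * p j) * log (p i / q i) := by
  refine sum_congr rfl fun i _ => ?_
  have hterm : ∀ j, H i j * p j * (log (p i / q i) - p i * q j / (q i * p j)) =
      H i j * p j * log (p i / q i) - p i / q i * (H i j * q j) := fun j => by
    field_simp [hp j, hq i]
  simp only [hterm, sum_sub_distrib, ← mul_sum, ← sum_mul, heq, mul_zero, sub_zero]

theorem sum_sum_mul_log_sub_nonpos {p q : V → ℝ} (hoff : ∀ i j, i ≠ j → 0 ≤ H i j)
    (hsum : ∀ j, ∑ i, H i j = 0) (hp : ∀ i, 0 < p i) (hq : ∀ i, 0 < q i) :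
    ∑ i, ∑ j, H i j * p j * (log (p i / q i) - p i * q j / (q i * p j)) ≤ 0 := by
  set x : V → ℝ := fun i => p i / q i
  have hx : ∀ i, 0 < x i := fun i => div_pos (hp i) (hq i)
  have hratio : ∀ i j, p i * q j / (q i * p j) = x i / x j := fun i j => by
    simp only [x]
    field_simp
  calc _ = ∑ i, ∑ j, (H i j * p j * (log (x i) - log (x j) + 1 - x i / x j) +
          H i j * (p j * (log (x j) - 1))) := by
        simp only [hratio]
        exact sum_congr rfl fun i _ => sum_congr rfl fun j _ => by ring
    _ = ∑ i, ∑ j, H i j * p j * (log (x i) - log (x j) + 1 - x i / x j) := by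
        simp only [sum_add_distrib, sum_sum_mul_eq_zero_of_sum_eq_zero hsum, add_zero]
    _ ≤ 0 := sum_nonpos fun i _ => sum_nonpos fun j _ => by
        obtain rfl | hij := eq_or_ne i j
        · simp [(hx i).ne']
        · exact mul_nonpos_of_nonneg_of_nonpos (mul_nonneg (hoff i j hij) (hp j).le)
            (log_sub_log_add_one_sub_div_nonpos (hx i) (hx j))

theorem hasDerivAt_sum_mul_log_div {q : V → ℝ} (hsum : ∀ j, ∑ i, H i j = 0)
    (hq : ∀ i, q i ≠ 0) {p : ℝ → V → ℝ} {t : ℝ} (hp : ∀ i, p t i ≠ 0)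
    (hmaster : ∀ i, HasDerivAt (fun s => p s i) (∑ j, H i j * p t j) t) :
    HasDerivAt (fun s => ∑ i, p s i * log (p s i / q i))
      (∑ i, (∑ j, H i j * p t j) * log (p t i / q i)) t := by
  refine (HasDerivAt.fun_sum fun i _ =>
    hasDerivAt_mul_log_div_const (hmaster i) (hp i) (hq i)).congr_deriv ?_
  simp only [mul_add, mul_one, sum_add_distrib, sum_sum_mul_eq_zero_of_sum_eq_zero hsum (p t),
    add_zero]

end MasterEquation

/-- For a closed Markov process with positive equilibrium `q` and a positive
solution `p t` of the master equation, the relative entropy `I(p(t), q)` has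
time derivative `∑ᵢⱼ H i j * p j * (ln(pᵢ/qᵢ) - pᵢqⱼ/(qᵢpⱼ))`, which is
nonpositive. -/
theorem relative_entropy_nonincreasing_closed {V : Type*} [Fintype V]
    (H : V → V → ℝ)
    (hoff : ∀ i j, i ≠ j → 0 ≤ H i j)
    (hsum : ∀ j, ∑ i, H i j = 0)
    (q : V → ℝ) (hq : ∀ i, 0 < q i)
    (heq : ∀ i, ∑ j, H i j * q j = 0)
    (p : ℝ → V → ℝ) (hp : ∀ t i, 0 < p t i)
    (hmaster : ∀ t i, HasDerivAt (fun s => p s i) (∑ j, H i j * p t j) t)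
    (t : ℝ) :
    HasDerivAt (fun s => ∑ i, p s i * Real.log (p s i / q i))
      (∑ i, ∑ j, H i j * p t j *
        (Real.log (p t i / q i) - p t i * q j / (q i * p t j))) t ∧
    ∑ i, ∑ j, H i j * p t j *
        (Real.log (p t i / q i) - p t i * q j / (q i * p t j)) ≤ 0 := by
  have hp_ne : ∀ i, p t i ≠ 0 := fun i => (hp t i).ne'
  have hq_ne : ∀ i, q i ≠ 0 := fun i => (hq i).ne'
  refine ⟨?_, sum_sum_mul_log_sub_nonpos hoff hsum (hp t) hq⟩
  rw [sum_sum_mul_log_sub_eq_sum_mul_log heq hp_ne hq_ne]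
  exact hasDerivAt_sum_mul_log_div hsum hq_ne hp_ne (hmaster t)
end

section
/- For a closed Markov process, the relative entropy between any two positive solutions p(t), q(t) of the master equation is non-increasing: d/dt I(p(t), q(t)) ≤ 0. -/
/-!
Differentiating, `dI/dt = ∑ᵢ ∑ⱼ Hᵢⱼ Fᵢⱼ` with `Fᵢⱼ = pⱼ (log (pᵢ/qᵢ) + 1) - pᵢ qⱼ / qᵢ`.
Since the columns of `H` sum to zero, `Fⱼⱼ` may be subtracted from every `Fᵢⱼ`; the diagonal
terms then vanish and, by `log x ≤ x - 1`, each off-diagonal `Fᵢⱼ - Fⱼⱼ` is `≤ 0` while `Hᵢⱼ ≥ 0`.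
-/

open Finset Real

theorem mul_log_div_sub_log_div_le {a b c d : ℝ} (ha : 0 < a) (hb : 0 < b) (hc : 0 < c)
    (hd : 0 < d) : c * (log (a / b) - log (c / d)) ≤ a * d / b - c := by
  have hlog : log (a / b) - log (c / d) ≤ a * d / (b * c) - 1 := by
    rw [← log_div (by positivity) (by positivity)]
    convert log_le_sub_one_of_pos (show 0 < a * d / (b * c) by positivity) using 2
    field_simp
  calc c * (log (a / b) - log (c / d)) ≤ c * (a * d / (b * c) - 1) := by gcongr
    _ = a * d / b - c := by field_simp

theorem sum_sum_mul_nonpos_of_le_diag {V : Type*} [Fintype V] {H : V → V → ℝ}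
    (hoff : ∀ i j, i ≠ j → 0 ≤ H i j) (hsum : ∀ j, ∑ i, H i j = 0)
    {F : V → V → ℝ} (hF : ∀ i j, F i j ≤ F j j) :
    ∑ i, ∑ j, H i j * F i j ≤ 0 := by
  have hdiag : ∑ i, ∑ j, H i j * F j j = 0 := by
    rw [sum_comm]
    simp [← sum_mul, hsum]
  calc ∑ i, ∑ j, H i j * F i j = ∑ i, ∑ j, H i j * (F i j - F j j) := by
        simp_rw [mul_sub, sum_sub_distrib, hdiag, sub_zero]
    _ ≤ 0 := sum_nonpos fun i _ => sum_nonpos fun j _ => by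
        rcases eq_or_ne i j with rfl | hij
        · simp
        · exact mul_nonpos_of_nonneg_of_nonpos (hoff i j hij) (sub_nonpos.2 (hF i j))

theorem hasDerivAt_mul_log_div {p q : ℝ → ℝ} {p' q' t : ℝ} (hp : HasDerivAt p p' t)
    (hq : HasDerivAt q q' t) (hpt : p t ≠ 0) (hqt : q t ≠ 0) :
    HasDerivAt (fun s => p s * log (p s / q s))
      (p' * (log (p t / q t) + 1) - p t * q' / q t) t := by
  refine (hp.mul ((hp.div hq hqt).log (div_ne_zero hpt hqt))).congr_deriv ?_
  simp only [Pi.div_apply]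
  field_simp
  ring

/-- For a closed Markov process, the relative entropy between any two positive
solutions of the master equation is non-increasing. -/
theorem relative_entropy_nonincreasing_two_solutions {V : Type*} [Fintype V]
    (H : V → V → ℝ)
    (hoff : ∀ i j, i ≠ j → 0 ≤ H i j)
    (hsum : ∀ j, ∑ i, H i j = 0)
    (p q : ℝ → V → ℝ)
    (hp : ∀ t i, 0 < p t i) (hq : ∀ t i, 0 < q t i)
    (hpm : ∀ t i, HasDerivAt (fun s => p s i) (∑ j, H i j * p t j) t)
    (hqm : ∀ t i, HasDerivAt (fun s => q s i) (∑ j, H i j * q t j) t)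
    (t : ℝ) :
    deriv (fun s => ∑ i, p s i * Real.log (p s i / q s i)) t ≤ 0 := by
  have hderiv := HasDerivAt.fun_sum (u := univ) fun i _ =>
    hasDerivAt_mul_log_div (hpm t i) (hqm t i) (hp t i).ne' (hq t i).ne'
  rw [hderiv.deriv]
  calc _ = ∑ i, ∑ j, H i j * (p t j * (log (p t i / q t i) + 1) - p t i * q t j / q t i) := by
        refine sum_congr rfl fun i _ => ?_
        simp_rw [sum_mul, mul_sum, sum_div, ← sum_sub_distrib]
        refine sum_congr rfl fun j _ => by ring
    _ ≤ 0 := sum_sum_mul_nonpos_of_le_diag hoff hsum fun i j => by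
        have := mul_log_div_sub_log_div_le (hp t i) (hq t i) (hp t j) (hq t j)
        rw [mul_div_cancel_right₀ _ (hq t j).ne']
        linarith
end

section
/- For an open Markov process with boundary B, and positive distributions p(t), q(t) obeying the open master equation, the rate of change of relative entropy is bounded by the boundary terms: d/dt I(p(t), q(t)) ≤ ∑_{i∈B} (Dp_i/Dt)·(∂I/∂p_i) + (Dq_i/Dt)·(∂I/∂q_i), where Dp_i/Dt := dp_i/dt − ∑_j H_{ij} p_j. -/
/-!
Writing `r i = p i / q i`, the chain rule gives `dI/dt = ∑ i, p' i * (log (r i) + 1) - q' i * r i`.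
Split `p' = H p + Dp/Dt` and `q' = H q + Dq/Dt`: the `D/Dt` part vanishes off `B` and is the
boundary term, so it remains to see that the bulk part (the pairing of `H p`, `H q` with the
gradient of `I`) is nonpositive. Exchanging the sums, column `j` of that pairing is
`∑ i, H i j * c i` with `c i = p j * (log (r i) + 1) - q j * r i`. Since `x ↦ a log x - b x` is
maximised at `x = a / b`, `c` is maximal at `i = j`; as the column of `H` sums to zero and is
nonnegative off the diagonal, `∑ i, H i j * c i = ∑ i, H i j * (c i - c j) ≤ 0`.
-/

open Finset Real

theorem mul_log_sub_mul_le {a b x : ℝ} (ha : 0 < a) (hb : 0 < b) (hx : 0 < x) :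
    a * log x - b * x ≤ a * log (a / b) - a := by
  have hab : 0 < a / b := div_pos ha hb
  have hlog : log x - log (a / b) ≤ x / (a / b) - 1 := by
    rw [← log_div hx.ne' hab.ne']
    exact log_le_sub_one_of_pos (div_pos hx hab)
  have hscale : a * (x / (a / b) - 1) = b * x - a := by
    field_simp
  nlinarith

theorem sum_mul_nonpos_of_le_apply {V : Type*} [Fintype V] {H : V → V → ℝ}
    (hoff : ∀ i j, i ≠ j → 0 ≤ H i j) (hsum : ∀ j, ∑ i, H i j = 0) (j : V) {c : V → ℝ}
    (hc : ∀ i, c i ≤ c j) : ∑ i, H i j * c i ≤ 0 := by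
  calc ∑ i, H i j * c i = ∑ i, H i j * (c i - c j) := by
        simp only [mul_sub, sum_sub_distrib, ← sum_mul, hsum, zero_mul, sub_zero]
    _ ≤ 0 := sum_nonpos fun i _ => by
        rcases eq_or_ne i j with rfl | hij
        · simp
        · exact mul_nonpos_of_nonneg_of_nonpos (hoff i j hij) (sub_nonpos.2 (hc i))

theorem sum_generator_mul_relEntropy_grad_nonpos {V : Type*} [Fintype V] {H : V → V → ℝ}
    (hoff : ∀ i j, i ≠ j → 0 ≤ H i j) (hsum : ∀ j, ∑ i, H i j = 0) {p q : V → ℝ}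
    (hp : ∀ i, 0 < p i) (hq : ∀ i, 0 < q i) :
    ∑ i, ((∑ j, H i j * p j) * (log (p i / q i) + 1) +
      (∑ j, H i j * q j) * (-(p i / q i))) ≤ 0 := by
  calc ∑ i, ((∑ j, H i j * p j) * (log (p i / q i) + 1) + (∑ j, H i j * q j) * (-(p i / q i)))
      = ∑ j, ∑ i, H i j * (p j * (log (p i / q i) + 1) - q j * (p i / q i)) := by
        rw [sum_comm]
        refine sum_congr rfl fun i _ => ?_
        simp only [sum_mul, ← sum_add_distrib]
        exact sum_congr rfl fun j _ => by ring
    _ ≤ 0 := sum_nonpos fun j _ => sum_mul_nonpos_of_le_apply hoff hsum j fun i => by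
        have hmax := mul_log_sub_mul_le (hp j) (hq j) (div_pos (hp i) (hq i))
        have hqj : q j * (p j / q j) = p j := mul_div_cancel₀ _ (hq j).ne'
        linarith

theorem HasDerivAt.mul_log_div {f g : ℝ → ℝ} {f' g' t : ℝ} (hf : HasDerivAt f f' t)
    (hg : HasDerivAt g g' t) (hf0 : f t ≠ 0) (hg0 : g t ≠ 0) :
    HasDerivAt (fun s => f s * Real.log (f s / g s))
      (f' * (Real.log (f t / g t) + 1) + g' * (-(f t / g t))) t := by
  refine (hf.fun_mul ((hf.fun_div hg hg0).log (div_ne_zero hf0 hg0))).congr_deriv ?_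
  field_simp
  ring

/-- For an open Markov process with boundary `B` and positive distributions
`p(t), q(t)` obeying the open master equation, the rate of change of relative
entropy is bounded by the flow of relative entropy through the boundary. -/
theorem relative_entropy_boundary_bound {V : Type*} [Fintype V]
    (H : V → V → ℝ)
    (hoff : ∀ i j, i ≠ j → 0 ≤ H i j)
    (hsum : ∀ j, ∑ i, H i j = 0)
    (B : Finset V)
    (p q : ℝ → V → ℝ)
    (hp : ∀ t i, 0 < p t i) (hq : ∀ t i, 0 < q t i)
    (p' q' : V → ℝ) (t : ℝ)
    (hpd : ∀ i, HasDerivAt (fun s => p s i) (p' i) t)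
    (hqd : ∀ i, HasDerivAt (fun s => q s i) (q' i) t)
    (hpint : ∀ i ∉ B, p' i = ∑ j, H i j * p t j)
    (hqint : ∀ i ∉ B, q' i = ∑ j, H i j * q t j) :
    deriv (fun s => ∑ i, p s i * Real.log (p s i / q s i)) t ≤
      ∑ i ∈ B, ((p' i - ∑ j, H i j * p t j) * (Real.log (p t i / q t i) + 1) +
        (q' i - ∑ j, H i j * q t j) * (-(p t i / q t i))) := by
  rw [(HasDerivAt.fun_sum fun i _ =>
    (hpd i).mul_log_div (hqd i) (hp t i).ne' (hq t i).ne').deriv]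
  have hboundary : ∑ i ∈ B, ((p' i - ∑ j, H i j * p t j) * (log (p t i / q t i) + 1) +
        (q' i - ∑ j, H i j * q t j) * (-(p t i / q t i))) =
      ∑ i, ((p' i - ∑ j, H i j * p t j) * (log (p t i / q t i) + 1) +
        (q' i - ∑ j, H i j * q t j) * (-(p t i / q t i))) :=
    sum_subset B.subset_univ fun i _ hi => by simp [hpint i hi, hqint i hi]
  have hsplit : ∑ i, (p' i * (log (p t i / q t i) + 1) + q' i * (-(p t i / q t i))) =
      ∑ i, ((p' i - ∑ j, H i j * p t j) * (log (p t i / q t i) + 1) +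
        (q' i - ∑ j, H i j * q t j) * (-(p t i / q t i))) +
      ∑ i, ((∑ j, H i j * p t j) * (log (p t i / q t i) + 1) +
        (∑ j, H i j * q t j) * (-(p t i / q t i))) := by
    rw [← sum_add_distrib]
    exact sum_congr rfl fun i _ => by ring
  linarith [sum_generator_mul_relEntropy_grad_nonpos hoff hsum (hp t) (hq t)]
end
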